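/- Contractivity of the continuous-time Hopfield neural network with MONE activation. Let W ∈ ℝ^{n×n}, B ∈ ℝ^{n×m}, u ∈ ℝᵐ, let Ψ : ℝⁿ → ℝⁿ be a diagonal MONE map, let P ∈ ℝ^{n×n} be symmetric positive definite, Q ∈ ℝ^{n×n} diagonal positive definite, and c > 0. If the 2n×2n block matrix [[−2(1−c)P, PW + Q],[WᵀP + Q, −2Q]] is negative semidefinite, then the vector field F(x) = −x + WΨ(x) + Bu satisfies (F(x) − F(x̃))ᵀ P (x − x̃) ≤ −c (x − x̃)ᵀ P (x − x̃) for all x, x̃ ∈ ℝⁿ, i.e., the Hopfield dynamics ẋ = −x + WΨ(x) + Bu are strongly infinitesimally contracting with rate c with respect to ‖·‖_P. -/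

import Mathlib

open Matrix

/-!
Write `e = x - x̃` and `d = Ψ x - Ψ x̃`. Evaluating the negative semidefinite block matrix at
`(e, d)` bounds `(F x - F x̃)ᵀ P e + c eᵀ P e` by `-(e - d)ᵀ Q d`, and this multiplier term is
nonpositive because `Q` is diagonal with positive entries and each coordinate of a MONE map satisfies
the sector condition `dᵢ (eᵢ - dᵢ) ≥ 0`.
-/

theorem sub_mul_sub_nonneg_of_slope_restricted {f : ℝ → ℝ} {k₁ k₂ s t : ℝ}
    (hlow : k₁ * (s - t) ^ 2 ≤ (f s - f t) * (s - t))
    (hupp : (f s - f t) * (s - t) ≤ k₂ * (s - t) ^ 2) :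
    0 ≤ (f s - f t - k₁ * (s - t)) * (k₂ * (s - t) - (f s - f t)) := by
  rcases eq_or_ne s t with rfl | hst
  · simp
  have hpos : 0 < (s - t) ^ 2 := sq_pos_of_ne_zero (sub_ne_zero.2 hst)
  refine nonneg_of_mul_nonneg_left ?_ hpos
  exact (mul_nonneg (sub_nonneg.2 hlow) (sub_nonneg.2 hupp)).trans_eq (by ring)

section

variable {ι : Type*} [Fintype ι]

theorem dotProduct_mulVec_nonneg_of_isDiag {Q : Matrix ι ι ℝ} (hQ : Q.IsDiag)
    (hQnonneg : ∀ i, 0 ≤ Q i i) {v w : ι → ℝ} (hvw : ∀ i, 0 ≤ v i * w i) :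
    0 ≤ v ⬝ᵥ Q *ᵥ w := by
  classical
  rw [← hQ.diagonal_diag]
  refine Finset.sum_nonneg fun i _ => ?_
  rw [mulVec_diagonal, diag_apply, mul_left_comm]
  exact mul_nonneg (hQnonneg i) (hvw i)

theorem sumElim_dotProduct_fromBlocks_mulVec_sumElim {κ : Type*} [Fintype κ] {R : Type*}
    [CommSemiring R] (A : Matrix ι ι R) (B : Matrix ι κ R) (C : Matrix κ ι R)
    (D : Matrix κ κ R) (x : ι → R) (y : κ → R) :
    Sum.elim x y ⬝ᵥ fromBlocks A B C D *ᵥ Sum.elim x y =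
      x ⬝ᵥ A *ᵥ x + x ⬝ᵥ B *ᵥ y + (y ⬝ᵥ C *ᵥ x + y ⬝ᵥ D *ᵥ y) := by
  simp only [fromBlocks_mulVec, Sum.elim_comp_inl, Sum.elim_comp_inr,
    sumElim_dotProduct_sumElim, dotProduct_add]

theorem hopfield_lmi_bound (W P Q : Matrix ι ι ℝ) (hPs : P.IsSymm) (hQs : Q.IsSymm) (c : ℝ)
    (hLMI : (-(fromBlocks ((-(2 * (1 - c))) • P) (P * W + Q) (Wᵀ * P + Q)
        ((-2 : ℝ) • Q))).PosSemidef) (e d : ι → ℝ) :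
    (-e + W *ᵥ d) ⬝ᵥ P *ᵥ e ≤ -c * (e ⬝ᵥ P *ᵥ e) - (e - d) ⬝ᵥ Q *ᵥ d := by
  have hquad := hLMI.dotProduct_mulVec_nonneg (Sum.elim e d)
  simp only [star_trivial, neg_mulVec, dotProduct_neg,
    sumElim_dotProduct_fromBlocks_mulVec_sumElim, add_mulVec, smul_mulVec, dotProduct_add,
    dotProduct_smul, smul_eq_mul, ← mulVec_mulVec] at hquad
  have hPWe : e ⬝ᵥ P *ᵥ (W *ᵥ d) = (W *ᵥ d) ⬝ᵥ P *ᵥ e := by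
    rw [← hPs.eq, dotProduct_transpose_mulVec, hPs.eq]
  have hWPd : d ⬝ᵥ Wᵀ *ᵥ (P *ᵥ e) = (W *ᵥ d) ⬝ᵥ P *ᵥ e := by
    rw [dotProduct_mulVec, vecMul_transpose]
  have hQed : d ⬝ᵥ Q *ᵥ e = e ⬝ᵥ Q *ᵥ d := by
    rw [← hQs.eq, dotProduct_transpose_mulVec, hQs.eq]
  rw [hPWe, hWPd, hQed] at hquad
  simp only [add_dotProduct, neg_dotProduct, sub_dotProduct]
  linarith

end

theorem hopfield_cts_mone_contraction_general
    {n m : ℕ}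
    (W : Matrix (Fin n) (Fin n) ℝ) (B : Matrix (Fin n) (Fin m) ℝ) (u : Fin m → ℝ)
    (Ψ : (Fin n → ℝ) → (Fin n → ℝ)) (ψ : Fin n → ℝ → ℝ)
    (hdiag : ∀ (x : Fin n → ℝ) (i : Fin n), Ψ x i = ψ i (x i))
    (hslope : ∀ (i : Fin n) (s t : ℝ),
      0 * (s - t)^2 ≤ (ψ i s - ψ i t) * (s - t) ∧ (ψ i s - ψ i t) * (s - t) ≤ 1 * (s - t)^2)
    (P Q : Matrix (Fin n) (Fin n) ℝ)
    (hPs : P.IsSymm) (hQd : Q.IsDiag) (hQ : Q.PosDef)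
    (c : ℝ)
    (hLMI : (-(fromBlocks ((-(2 * (1 - c))) • P) (P * W + Q) (Wᵀ * P + Q)
        ((-2 : ℝ) • Q))).PosSemidef) :
    ∀ x xt : Fin n → ℝ,
      ((-x + W *ᵥ Ψ x + B *ᵥ u) - (-xt + W *ᵥ Ψ xt + B *ᵥ u)) ⬝ᵥ P *ᵥ (x - xt) ≤
        -c * ((x - xt) ⬝ᵥ P *ᵥ (x - xt)) := by
  intro x xt
  have hF : (-x + W *ᵥ Ψ x + B *ᵥ u) - (-xt + W *ᵥ Ψ xt + B *ᵥ u) =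
      -(x - xt) + W *ᵥ (Ψ x - Ψ xt) := by
    rw [mulVec_sub]; abel
  have hsector : 0 ≤ (x - xt - (Ψ x - Ψ xt)) ⬝ᵥ Q *ᵥ (Ψ x - Ψ xt) := by
    refine dotProduct_mulVec_nonneg_of_isDiag hQd (fun _ => hQ.diag_pos.le) fun i => ?_
    have hψ := sub_mul_sub_nonneg_of_slope_restricted (hslope i (x i) (xt i)).1
      (hslope i (x i) (xt i)).2
    simp only [Pi.sub_apply, hdiag]
    linarith
  have hbound := hopfield_lmi_bound W P Q hPs hQd.isSymm c hLMI (x - xt) (Ψ x - Ψ xt)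
  rw [hF]
  linarith

/-- Contractivity of the continuous-time Hopfield neural network with MONE activation. -/
theorem hopfield_cts_mone_contraction
    {n m : ℕ}
    (W : Matrix (Fin n) (Fin n) ℝ) (B : Matrix (Fin n) (Fin m) ℝ) (u : Fin m → ℝ)
    (Ψ : (Fin n → ℝ) → (Fin n → ℝ)) (ψ : Fin n → ℝ → ℝ)
    (hdiag : ∀ (x : Fin n → ℝ) (i : Fin n), Ψ x i = ψ i (x i))
    (hslope : ∀ (i : Fin n) (s t : ℝ),
      0 * (s - t)^2 ≤ (ψ i s - ψ i t) * (s - t) ∧ (ψ i s - ψ i t) * (s - t) ≤ 1 * (s - t)^2)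
    (P Q : Matrix (Fin n) (Fin n) ℝ)
    (hPs : P.IsSymm) (hP : P.PosDef) (hQd : Q.IsDiag) (hQ : Q.PosDef)
    (c : ℝ) (hc : 0 < c)
    (hLMI : (-(fromBlocks ((-(2 * (1 - c))) • P) (P * W + Q) (Wᵀ * P + Q)
        ((-2 : ℝ) • Q))).PosSemidef) :
    ∀ x xt : Fin n → ℝ,
      ((-x + W *ᵥ Ψ x + B *ᵥ u) - (-xt + W *ᵥ Ψ xt + B *ᵥ u)) ⬝ᵥ P *ᵥ (x - xt) ≤
        -c * ((x - xt) ⬝ᵥ P *ᵥ (x - xt)) :=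
  hopfield_cts_mone_contraction_general W B u Ψ ψ hdiag hslope P Q hPs hQd hQ c hLMI
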